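/- arXiv:2210.10708 — 3 statements merged into one kernel-verified Lean document; each statement's English description precedes it below -/
import Mathlib

section
/- Let H and K be finite groups with no common direct factor and G = H × K. Then every automorphism of G can be written as a product abcd where a ∈ A, b ∈ B, c ∈ C, d ∈ D, with A ≅ Aut(H), D ≅ Aut(K) acting componentwise, B the subgroup induced by homomorphisms K → Z(H), and C the subgroup induced by homomorphisms H → Z(K); moreover A × D normalizes both B and C. -/
/-- A common direct factor of two groups `H` and `K`: a nontrivial group `L`
together with decompositions `H ≃* L × M` and `K ≃* L × N`. -/
structure CommonDirectFactor (H K : Type) [Group H] [Group K] where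
  L : Type
  M : Type
  N : Type
  [grpL : Group L]
  [grpM : Group M]
  [grpN : Group N]
  nontrivial : Nontrivial L
  isoH : H ≃* L × M
  isoK : K ≃* L × N

/-- The subgroup-like set `A` of `Aut(H × K)`: automorphisms acting as an
automorphism of `H` on the first factor and as the identity on the second. -/
def autSetA (H K : Type) [Group H] [Group K] : Set (MulAut (H × K)) :=
  {θ | ∃ α : MulAut H, ∀ x : H × K, θ x = (α x.1, x.2)}

/-- The set `B`: automorphisms of the form `(h, k) ↦ (h * β k, k)` for a
homomorphism `β : K →* H` with central image. -/
def autSetB (H K : Type) [Group H] [Group K] : Set (MulAut (H × K)) :=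
  {θ | ∃ β : K →* H, (∀ k, β k ∈ Subgroup.center H) ∧
    ∀ x : H × K, θ x = (x.1 * β x.2, x.2)}

/-- The set `C`: automorphisms of the form `(h, k) ↦ (h, k * γ h)` for a
homomorphism `γ : H →* K` with central image. -/
def autSetC (H K : Type) [Group H] [Group K] : Set (MulAut (H × K)) :=
  {θ | ∃ γ : H →* K, (∀ h, γ h ∈ Subgroup.center K) ∧
    ∀ x : H × K, θ x = (x.1, x.2 * γ x.1)}

/-- The set `D`: automorphisms acting as the identity on the first factor and
as an automorphism of `K` on the second. -/
def autSetD (H K : Type) [Group H] [Group K] : Set (MulAut (H × K)) :=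
  {θ | ∃ δ : MulAut K, ∀ x : H × K, θ x = (x.1, δ x.2)}

/-!
Write `θ = (α β; γ δ)` and `θ⁻¹ = (α' β'; γ' δ')`. The endomorphisms `σ₁ = αα'` of `H` and
`σ₂ = δ'δ` of `K` commute with inner automorphisms, `β` intertwines `σ₂` with `σ₁` and `γ'`
intertwines `σ₁` with `σ₂`, and `β` (resp. `γ'`) kills only `σ₂`-fixed (resp. `σ₁`-fixed) elements.
For `n` with `σ₁ⁿ` and `σ₂ⁿ` idempotent, Fitting's decomposition splits `H ≅ ker σ₁ⁿ × im σ₁ⁿ` and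
`K ≅ ker σ₂ⁿ × im σ₂ⁿ`, while `β` and `γ'` inject the two kernels into each other, so these are
isomorphic. Without a common direct factor `ker σ₂ⁿ` is trivial, so `δ` is injective, hence an
automorphism. Then `γ` takes central values, and `θ (c d)⁻¹`, with `c`, `d` built from `γ` and `δ`,
preserves the `K`-coordinate, which makes it a product `a b`.
-/

theorem exists_isIdempotentElem_pow {M : Type*} [Monoid M] [Finite M] (x : M) :
    ∃ n, 0 < n ∧ IsIdempotentElem (x ^ n) := by
  obtain ⟨a, b, hab, h⟩ := Finite.exists_ne_map_eq_of_infinite (fun n : ℕ => x ^ (n + 1))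
  wlog hlt : a < b generalizing a b
  · exact this b a hab.symm h.symm (by omega)
  obtain ⟨p, rfl⟩ : ∃ p, b = a + p := ⟨b - a, by omega⟩
  have hp : 0 < p := by omega
  have hcycle : ∀ k, a + 1 ≤ k → ∀ t, x ^ (k + p * t) = x ^ k := by
    intro k hk t
    obtain ⟨c, rfl⟩ := Nat.exists_eq_add_of_le hk
    induction t with
    | zero => simp
    | succ t ih =>
      calc x ^ (a + 1 + c + p * (t + 1)) = x ^ (a + p + 1) * x ^ (c + p * t) := by
            rw [← pow_add]; ring_nf
        _ = x ^ (a + 1 + c) := by rw [← h, ← pow_add, ← ih]; ring_nf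
  refine ⟨p * (a + 1), Nat.mul_pos hp a.succ_pos, ?_⟩
  rw [IsIdempotentElem, ← pow_add]
  exact hcycle _ (Nat.le_mul_of_pos_left _ hp) (a + 1)

namespace MonoidHom

section Fitting

variable {G : Type*} [Group G] {e : G →* G}

theorem range_normal_of_commute_conj (he : ∀ x, Function.Commute e (MulAut.conj x)) :
    e.range.Normal :=
  ⟨by rintro _ ⟨g, rfl⟩ x; exact ⟨x * g * x⁻¹, he x g⟩⟩

theorem disjoint_ker_range_of_idempotent (he : ∀ g, e (e g) = e g) : Disjoint e.ker e.range := by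
  rw [Subgroup.disjoint_def]
  rintro _ hx ⟨g, rfl⟩
  rwa [mem_ker, he] at hx

noncomputable def kerProdRangeEquiv (he : ∀ g, e (e g) = e g)
    (hconj : ∀ x, Function.Commute e (MulAut.conj x)) : e.ker × e.range ≃* G :=
  MulEquiv.ofBijective
    (e.ker.subtype.noncommCoprod e.range.subtype fun a b =>
      Subgroup.commute_of_normal_of_disjoint _ _ inferInstance (range_normal_of_commute_conj hconj)
        (disjoint_ker_range_of_idempotent he) a b a.2 b.2) <| by
    refine ⟨?_, fun g => ⟨(⟨g * (e g)⁻¹, ?_⟩, ⟨e g, g, rfl⟩), inv_mul_cancel_right g (e g)⟩⟩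
    · rw [injective_iff_map_eq_one]
      rintro ⟨a, b⟩ hab
      have hb : (b : G) = (a : G)⁻¹ := eq_inv_of_mul_eq_one_right hab
      have ha : (a : G) = 1 := Subgroup.disjoint_def.1 (disjoint_ker_range_of_idempotent he) a.2
        (by simpa [hb] using b.2)
      ext <;> simp [ha, hb]
    · rw [mem_ker, map_mul, map_inv, he, mul_inv_cancel]

end Fitting

section KerMap

variable {G₁ G₂ : Type*} [Group G₁] [Group G₂] {e₁ : G₁ →* G₁} {e₂ : G₂ →* G₂}

theorem ker_le_comap_ker_of_semiconj {f : G₁ →* G₂} (hf : Function.Semiconj f e₁ e₂) :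
    e₁.ker ≤ e₂.ker.comap f := fun x hx => by
  rw [Subgroup.mem_comap, mem_ker, ← hf x, mem_ker.1 hx, map_one]

def kerMap (f : G₁ →* G₂) (hf : Function.Semiconj f e₁ e₂) : e₁.ker →* e₂.ker :=
  (f.subgroupComap e₂.ker).comp (Subgroup.inclusion (ker_le_comap_ker_of_semiconj hf))

theorem kerMap_injective {f : G₁ →* G₂} (hf : Function.Semiconj f e₁ e₂)
    (hfix : ∀ x, f x = 1 → e₁ x = x) : Function.Injective (kerMap f hf) := by
  rw [injective_iff_map_eq_one]
  rintro ⟨x, hx⟩ hfx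
  ext
  exact (hfix x (congrArg Subtype.val hfx)).symm.trans (mem_ker.1 hx)

noncomputable def kerEquivOfSemiconj [Finite G₁] [Finite G₂] {f : G₁ →* G₂} {g : G₂ →* G₁}
    (hf : Function.Semiconj f e₁ e₂) (hg : Function.Semiconj g e₂ e₁)
    (hfix : ∀ x, f x = 1 → e₁ x = x) (hgfix : ∀ y, g y = 1 → e₂ y = y) : e₁.ker ≃* e₂.ker :=
  MulEquiv.ofBijective (kerMap f hf) <| (kerMap_injective hf hfix).bijective_of_nat_card_le
    (Nat.card_le_card_of_injective _ (kerMap_injective hg hgfix))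

end KerMap

end MonoidHom

theorem ker_eq_bot_of_isEmpty_commonDirectFactor {H K : Type} [Group H] [Group K]
    (hnc : IsEmpty (CommonDirectFactor H K)) {eH : H →* H} {eK : K →* K}
    (hidemH : ∀ h, eH (eH h) = eH h) (hconjH : ∀ x, Function.Commute eH (MulAut.conj x))
    (hidemK : ∀ k, eK (eK k) = eK k) (hconjK : ∀ x, Function.Commute eK (MulAut.conj x))
    (hker : eK.ker ≃* eH.ker) : eK.ker = ⊥ := by
  by_contra hne
  exact hnc.false
    { L := eK.ker, M := eH.range, N := eK.range
      nontrivial := (Subgroup.nontrivial_iff_ne_bot _).2 hne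
      isoH := (MonoidHom.kerProdRangeEquiv hidemH hconjH).symm.trans
        (MulEquiv.prodCongr hker.symm (MulEquiv.refl _))
      isoK := (MonoidHom.kerProdRangeEquiv hidemK hconjK).symm }

namespace ProdAut

section Entries

variable {H K : Type*} [Group H] [Group K] (θ : MulAut (H × K))

def alpha : H →* H := (MonoidHom.fst H K).comp (θ.toMonoidHom.comp (MonoidHom.inl H K))

def beta : K →* H := (MonoidHom.fst H K).comp (θ.toMonoidHom.comp (MonoidHom.inr H K))

def gamma : H →* K := (MonoidHom.snd H K).comp (θ.toMonoidHom.comp (MonoidHom.inl H K))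

def delta : K →* K := (MonoidHom.snd H K).comp (θ.toMonoidHom.comp (MonoidHom.inr H K))

theorem apply_inl (h : H) : θ (h, 1) = (alpha θ h, gamma θ h) := rfl

theorem apply_inr (k : K) : θ (1, k) = (beta θ k, delta θ k) := rfl

theorem apply_eq (h : H) (k : K) :
    θ (h, k) = (alpha θ h * beta θ k, gamma θ h * delta θ k) := by
  rw [← Prod.mk_mul_mk, ← apply_inl, ← apply_inr, ← map_mul, Prod.mk_mul_mk, mul_one, one_mul]

theorem commute_apply_inl_apply_inr (h : H) (k : K) : Commute (θ (h, 1)) (θ (1, k)) := by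
  rw [Commute, SemiconjBy, ← map_mul, ← map_mul, Prod.mk_mul_mk, Prod.mk_mul_mk, mul_one, one_mul,
    mul_one, one_mul]

theorem commute_alpha_beta (h : H) (k : K) : Commute (alpha θ h) (beta θ k) :=
  congrArg Prod.fst (commute_apply_inl_apply_inr θ h k).eq

theorem commute_gamma_delta (h : H) (k : K) : Commute (gamma θ h) (delta θ k) :=
  congrArg Prod.snd (commute_apply_inl_apply_inr θ h k).eq

theorem symm_apply_apply_inl (h : H) :
    alpha θ.symm (alpha θ h) * beta θ.symm (gamma θ h) = h ∧
      gamma θ.symm (alpha θ h) * delta θ.symm (gamma θ h) = 1 := by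
  have hθ := θ.symm_apply_apply (h, 1)
  rwa [apply_inl, apply_eq, Prod.mk.injEq] at hθ

theorem symm_apply_apply_inr (k : K) :
    alpha θ.symm (beta θ k) * beta θ.symm (delta θ k) = 1 ∧
      gamma θ.symm (beta θ k) * delta θ.symm (delta θ k) = k := by
  have hθ := θ.symm_apply_apply (1, k)
  rwa [apply_inr, apply_eq, Prod.mk.injEq] at hθ

end Entries

section Sigma

variable {H K : Type*} [Group H] [Group K] (θ : MulAut (H × K))

def sigmaFst : H →* H := (alpha θ).comp (alpha θ.symm)

def sigmaSnd : K →* K := (delta θ.symm).comp (delta θ)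

theorem gamma_symm_beta_mul_sigmaSnd (k : K) : gamma θ.symm (beta θ k) * sigmaSnd θ k = k :=
  (symm_apply_apply_inr θ k).2

theorem sigmaFst_mul_beta_gamma_symm (h : H) : sigmaFst θ h * beta θ (gamma θ.symm h) = h :=
  (symm_apply_apply_inl θ.symm h).1

theorem semiconj_beta : Function.Semiconj (beta θ) (sigmaSnd θ) (sigmaFst θ) := fun k => by
  have h₁ := eq_inv_of_mul_eq_one_left (symm_apply_apply_inr θ k).1
  have h₂ := eq_inv_of_mul_eq_one_left (symm_apply_apply_inr θ.symm (delta θ k)).1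
  rw [MulEquiv.symm_symm] at h₂
  simp only [sigmaFst, sigmaSnd, MonoidHom.comp_apply, h₁, map_inv, h₂, inv_inv]

theorem semiconj_gamma_symm : Function.Semiconj (gamma θ.symm) (sigmaFst θ) (sigmaSnd θ) :=
  fun h => by
  have h₁ := eq_inv_of_mul_eq_one_left (symm_apply_apply_inl θ (alpha θ.symm h)).2
  have h₂ := eq_inv_of_mul_eq_one_left (symm_apply_apply_inl θ.symm h).2
  rw [MulEquiv.symm_symm] at h₂
  simp only [sigmaFst, sigmaSnd, MonoidHom.comp_apply, h₁, h₂, map_inv, inv_inv]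

theorem sigmaSnd_commute_conj (x : K) : Function.Commute (sigmaSnd θ) (MulAut.conj x) :=
  fun k => by
  set c := gamma θ.symm (beta θ x)
  have hc : Commute c (sigmaSnd θ (x * k * x⁻¹)) := commute_gamma_delta θ.symm _ _
  calc sigmaSnd θ (x * k * x⁻¹) = c * sigmaSnd θ (x * k * x⁻¹) * c⁻¹ := hc.mul_inv_cancel.symm
    _ = (c * sigmaSnd θ x) * sigmaSnd θ k * (c * sigmaSnd θ x)⁻¹ := by
      simp only [map_mul, map_inv]; group
    _ = x * sigmaSnd θ k * x⁻¹ := by rw [gamma_symm_beta_mul_sigmaSnd]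

theorem sigmaFst_commute_conj (x : H) : Function.Commute (sigmaFst θ) (MulAut.conj x) :=
  fun h => by
  set b := beta θ (gamma θ.symm x)
  have hb : Commute b (sigmaFst θ h) := (commute_alpha_beta θ _ _).symm
  calc sigmaFst θ (x * h * x⁻¹)
      = sigmaFst θ x * (b * sigmaFst θ h * b⁻¹) * (sigmaFst θ x)⁻¹ := by
        rw [hb.mul_inv_cancel]; simp only [map_mul, map_inv]
    _ = (sigmaFst θ x * b) * sigmaFst θ h * (sigmaFst θ x * b)⁻¹ := by group
    _ = x * sigmaFst θ h * x⁻¹ := by rw [sigmaFst_mul_beta_gamma_symm]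

end Sigma

theorem sigmaSnd_injective {H K : Type} [Group H] [Group K] [Finite H] [Finite K]
    (hnc : IsEmpty (CommonDirectFactor H K)) (θ : MulAut (H × K)) :
    Function.Injective (sigmaSnd θ) := by
  -- a common exponent for both: an idempotent power of the pair in the product monoid
  have : Finite (Monoid.End H × Monoid.End K) :=
    Finite.of_injective (fun σ => ((σ.1 : H → H), (σ.2 : K → K)))
      (Prod.map_injective.2 ⟨DFunLike.coe_injective, DFunLike.coe_injective⟩)
  obtain ⟨n, hn, hidem⟩ :=
    exists_isIdempotentElem_pow (M := Monoid.End H × Monoid.End K) (sigmaFst θ, sigmaSnd θ)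
  set eH : H →* H := (show Monoid.End H from sigmaFst θ) ^ n
  set eK : K →* K := (show Monoid.End K from sigmaSnd θ) ^ n
  have hcoeH : ⇑eH = (sigmaFst θ)^[n] := rfl
  have hcoeK : ⇑eK = (sigmaSnd θ)^[n] := rfl
  have hker : eK.ker ≃* eH.ker := MonoidHom.kerEquivOfSemiconj
    (hcoeK ▸ hcoeH ▸ (semiconj_beta θ).iterate_right n)
    (hcoeK ▸ hcoeH ▸ (semiconj_gamma_symm θ).iterate_right n)
    (fun k hk => hcoeK ▸ Function.iterate_fixed
      (by simpa [hk] using gamma_symm_beta_mul_sigmaSnd θ k) n)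
    (fun h hh => hcoeH ▸ Function.iterate_fixed
      (by simpa [hh] using sigmaFst_mul_beta_gamma_symm θ h) n)
  have hbot : eK.ker = ⊥ := ker_eq_bot_of_isEmpty_commonDirectFactor hnc
    (fun h => DFunLike.congr_fun (congrArg Prod.fst hidem) h)
    (fun x => hcoeH ▸ (sigmaFst_commute_conj θ x).iterate_left n)
    (fun k => DFunLike.congr_fun (congrArg Prod.snd hidem) k)
    (fun x => hcoeK ▸ (sigmaSnd_commute_conj θ x).iterate_left n) hker
  have hinj : Function.Injective (sigmaSnd θ)^[n] := hcoeK ▸ (MonoidHom.ker_eq_bot_iff eK).1 hbot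
  obtain ⟨m, rfl⟩ := Nat.exists_eq_add_of_lt hn
  exact (Function.iterate_succ _ _ ▸ hinj).of_comp

section Generators

open scoped IsMulCommutative

variable (H K : Type*) [Group H] [Group K]

def autFst : MulAut H →* MulAut (H × K) where
  toFun α := α.prodCongr (MulEquiv.refl K)
  map_one' := rfl
  map_mul' _ _ := rfl

def autSnd : MulAut K →* MulAut (H × K) where
  toFun δ := (MulEquiv.refl H).prodCongr δ
  map_one' := rfl
  map_mul' _ _ := rfl

@[simp]
theorem autFst_apply (α : MulAut H) (x : H × K) : autFst H K α x = (α x.1, x.2) := rfl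

@[simp]
theorem autSnd_apply (δ : MulAut K) (x : H × K) : autSnd H K δ x = (x.1, δ x.2) := rfl

def transvectionFst : (K →* Subgroup.center H) →* MulAut (H × K) where
  toFun β :=
    { toFun := fun x => (x.1 * β x.2, x.2)
      invFun := fun x => (x.1 * (β x.2)⁻¹, x.2)
      left_inv := fun x => by simp
      right_inv := fun x => by simp
      map_mul' := fun x y => by
        ext
        · simp only [Prod.fst_mul, Prod.snd_mul, map_mul, Subgroup.coe_mul]
          rw [mul_assoc, ← mul_assoc y.1, Subgroup.mem_center_iff.1 (β x.2).2 y.1]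
          group
        · rfl }
  map_one' := by ext <;> simp
  map_mul' β₁ β₂ := by
    ext x
    · simp only [MonoidHom.mul_apply, Subgroup.coe_mul, MulEquiv.coe_mk, Equiv.coe_fn_mk,
        MulAut.mul_apply, mul_assoc]
      rw [Subgroup.mem_center_iff.1 (β₂ x.2).2]
    · rfl

@[simp]
theorem transvectionFst_apply (β : K →* Subgroup.center H) (x : H × K) :
    transvectionFst H K β x = (x.1 * β x.2, x.2) := rfl

def transvectionSnd : (H →* Subgroup.center K) →* MulAut (H × K) where
  toFun γ :=
    { toFun := fun x => (x.1, x.2 * γ x.1)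
      invFun := fun x => (x.1, x.2 * (γ x.1)⁻¹)
      left_inv := fun x => by simp
      right_inv := fun x => by simp
      map_mul' := fun x y => by
        ext
        · rfl
        · simp only [Prod.fst_mul, Prod.snd_mul, map_mul, Subgroup.coe_mul]
          rw [mul_assoc, ← mul_assoc y.2, Subgroup.mem_center_iff.1 (γ x.1).2 y.2]
          group }
  map_one' := by ext <;> simp
  map_mul' γ₁ γ₂ := by
    ext x
    · rfl
    · simp only [MonoidHom.mul_apply, Subgroup.coe_mul, MulEquiv.coe_mk, Equiv.coe_fn_mk,
        MulAut.mul_apply, mul_assoc]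
      rw [Subgroup.mem_center_iff.1 (γ₂ x.1).2]

@[simp]
theorem transvectionSnd_apply (γ : H →* Subgroup.center K) (x : H × K) :
    transvectionSnd H K γ x = (x.1, x.2 * γ x.1) := rfl

theorem autFst_mul_autSnd_conj_transvectionFst (α : MulAut H) (δ : MulAut K)
    (β : K →* Subgroup.center H) :
    autFst H K α * autSnd H K δ * transvectionFst H K β * (autFst H K α * autSnd H K δ)⁻¹ =
      transvectionFst H K
        ((Subgroup.centerCongr α).toMonoidHom.comp (β.comp δ.symm.toMonoidHom)) := by
  rw [mul_inv_eq_iff_eq_mul]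
  ext x
  · simp; rfl
  · simp

theorem autFst_mul_autSnd_conj_transvectionSnd (α : MulAut H) (δ : MulAut K)
    (γ : H →* Subgroup.center K) :
    autFst H K α * autSnd H K δ * transvectionSnd H K γ * (autFst H K α * autSnd H K δ)⁻¹ =
      transvectionSnd H K
        ((Subgroup.centerCongr δ).toMonoidHom.comp (γ.comp α.symm.toMonoidHom)) := by
  rw [mul_inv_eq_iff_eq_mul]
  ext x
  · simp
  · simp; rfl

end Generators

section Decomposition

variable {H K : Type*} [Group H] [Group K]

theorem exists_eq_autFst_mul_transvectionFst (φ : MulAut (H × K)) (hφ : ∀ x, (φ x).2 = x.2) :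
    ∃ α β, φ = autFst H K α * transvectionFst H K β := by
  have hγ : ∀ h, gamma φ h = 1 := fun h => hφ (h, 1)
  have hα : Function.Bijective (alpha φ) := by
    refine ⟨(injective_iff_map_eq_one _).2 fun h hh => ?_, fun h => ?_⟩
    · have : φ (h, 1) = φ 1 := by rw [apply_inl, hh, hγ, map_one]; rfl
      exact congrArg Prod.fst (φ.injective this)
    · obtain ⟨⟨h', k'⟩, hx⟩ := φ.surjective (h, 1)
      obtain rfl : k' = 1 := (hφ _).symm.trans (congrArg Prod.snd hx)
      exact ⟨h', congrArg Prod.fst hx⟩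
  set α := MulEquiv.ofBijective (alpha φ) hα
  have hβ : ∀ k, beta φ k ∈ Subgroup.center H := fun k => Subgroup.mem_center_iff.2 fun g => by
    obtain ⟨h, rfl⟩ := hα.2 g
    exact commute_alpha_beta φ h k
  refine ⟨α, (Subgroup.centerCongr α.symm).toMonoidHom.comp ((beta φ).codRestrict _ hβ), ?_⟩
  ext ⟨h, k⟩
  · rw [apply_eq]
    simp only [MulAut.mul_apply, transvectionFst_apply, autFst_apply, map_mul]
    exact congrArg (alpha φ h * ·) (α.apply_symm_apply (beta φ k)).symm
  · exact hφ _

end Decomposition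

section Sets

variable (H K : Type) [Group H] [Group K]

open scoped IsMulCommutative

theorem coe_range_autFst : ((autFst H K).range : Set (MulAut (H × K))) = autSetA H K := by
  ext θ
  constructor
  · rintro ⟨α, rfl⟩
    exact ⟨α, fun _ => rfl⟩
  · rintro ⟨α, hα⟩
    exact ⟨α, MulEquiv.ext fun x => (hα x).symm⟩

theorem coe_range_autSnd : ((autSnd H K).range : Set (MulAut (H × K))) = autSetD H K := by
  ext θ
  constructor
  · rintro ⟨δ, rfl⟩
    exact ⟨δ, fun _ => rfl⟩
  · rintro ⟨δ, hδ⟩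
    exact ⟨δ, MulEquiv.ext fun x => (hδ x).symm⟩

theorem coe_range_transvectionFst :
    ((transvectionFst H K).range : Set (MulAut (H × K))) = autSetB H K := by
  ext θ
  constructor
  · rintro ⟨β, rfl⟩
    exact ⟨(Subgroup.center H).subtype.comp β, fun k => (β k).2, fun _ => rfl⟩
  · rintro ⟨β, hβ, hθ⟩
    exact ⟨β.codRestrict _ hβ, MulEquiv.ext fun x => (hθ x).symm⟩

theorem coe_range_transvectionSnd :
    ((transvectionSnd H K).range : Set (MulAut (H × K))) = autSetC H K := by
  ext θ
  constructor
  · rintro ⟨γ, rfl⟩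
    exact ⟨(Subgroup.center K).subtype.comp γ, fun h => (γ h).2, fun _ => rfl⟩
  · rintro ⟨γ, hγ, hθ⟩
    exact ⟨γ.codRestrict _ hγ, MulEquiv.ext fun x => (hθ x).symm⟩

end Sets

section Finite

variable {H K : Type} [Group H] [Group K] [Finite H] [Finite K]

theorem delta_bijective (hnc : IsEmpty (CommonDirectFactor H K)) (θ : MulAut (H × K)) :
    Function.Bijective (delta θ) :=
  Finite.injective_iff_bijective.1 <|
    Function.Injective.of_comp (f := delta θ.symm) (sigmaSnd_injective hnc θ)

theorem exists_eq_autFst_mul_transvectionFst_mul_transvectionSnd_mul_autSnd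
    (hnc : IsEmpty (CommonDirectFactor H K)) (θ : MulAut (H × K)) :
    ∃ α β γ δ,
      θ = autFst H K α * transvectionFst H K β * transvectionSnd H K γ * autSnd H K δ := by
  have hδ := delta_bijective hnc θ
  have hγ : ∀ h, gamma θ h ∈ Subgroup.center K := fun h => Subgroup.mem_center_iff.2 fun g => by
    obtain ⟨k, rfl⟩ := hδ.2 g
    exact (commute_gamma_delta θ h k).symm
  set cd := transvectionSnd H K ((gamma θ).codRestrict _ hγ) *
    autSnd H K (MulEquiv.ofBijective (delta θ) hδ)
  have hsnd : ∀ x, (θ x).2 = (cd x).2 := fun ⟨h, k⟩ => by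
    rw [apply_eq]
    exact (Subgroup.mem_center_iff.1 (hγ h) (delta θ k)).symm
  obtain ⟨α, β, hφ⟩ := exists_eq_autFst_mul_transvectionFst (θ * cd⁻¹) fun x => by
    simpa using hsnd (cd⁻¹ x)
  exact ⟨α, β, _, _, by rw [mul_assoc _ (transvectionSnd H K _), ← hφ, inv_mul_cancel_right]⟩

end Finite

end ProdAut

theorem stmt_3 (H K : Type) [Group H] [Group K] [Finite H] [Finite K]
    (hnc : IsEmpty (CommonDirectFactor H K)) :
    (∃ SA : Subgroup (MulAut (H × K)), (SA : Set (MulAut (H × K))) = autSetA H K) ∧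
    (∃ SB : Subgroup (MulAut (H × K)), (SB : Set (MulAut (H × K))) = autSetB H K) ∧
    (∃ SC : Subgroup (MulAut (H × K)), (SC : Set (MulAut (H × K))) = autSetC H K) ∧
    (∃ SD : Subgroup (MulAut (H × K)), (SD : Set (MulAut (H × K))) = autSetD H K) ∧
    (∀ θ : MulAut (H × K), ∃ a ∈ autSetA H K, ∃ b ∈ autSetB H K,
      ∃ c ∈ autSetC H K, ∃ d ∈ autSetD H K, θ = a * b * c * d) ∧
    (∀ a ∈ autSetA H K, ∀ d ∈ autSetD H K, ∀ b ∈ autSetB H K,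
      (a * d) * b * (a * d)⁻¹ ∈ autSetB H K) ∧
    (∀ a ∈ autSetA H K, ∀ d ∈ autSetD H K, ∀ c ∈ autSetC H K,
      (a * d) * c * (a * d)⁻¹ ∈ autSetC H K) := by
  simp only [← ProdAut.coe_range_autFst, ← ProdAut.coe_range_autSnd,
    ← ProdAut.coe_range_transvectionFst, ← ProdAut.coe_range_transvectionSnd, SetLike.mem_coe,
    MonoidHom.mem_range]
  refine ⟨⟨_, rfl⟩, ⟨_, rfl⟩, ⟨_, rfl⟩, ⟨_, rfl⟩, fun θ => ?_, ?_, ?_⟩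
  · obtain ⟨α, β, γ, δ, rfl⟩ :=
      ProdAut.exists_eq_autFst_mul_transvectionFst_mul_transvectionSnd_mul_autSnd hnc θ
    exact ⟨_, ⟨α, rfl⟩, _, ⟨β, rfl⟩, _, ⟨γ, rfl⟩, _, ⟨δ, rfl⟩, rfl⟩
  · rintro _ ⟨α, rfl⟩ _ ⟨δ, rfl⟩ _ ⟨β, rfl⟩
    exact ⟨_, (ProdAut.autFst_mul_autSnd_conj_transvectionFst H K α δ β).symm⟩
  · rintro _ ⟨α, rfl⟩ _ ⟨δ, rfl⟩ _ ⟨γ, rfl⟩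
    exact ⟨_, (ProdAut.autFst_mul_autSnd_conj_transvectionSnd H K α δ γ).symm⟩
end

section
/- Let p, q be distinct primes with q^2 dividing p−1, let r have multiplicative order q^2 modulo p^2, and let G = ⟨a, b | a^{q^2} = b^{p^2} = 1, a⁻¹ba = b^r⟩. Then Aut(G) is isomorphic to Z_{p^2} ⋊ Z_{p(p-1)} (the holomorph of Z_{p^2}). -/
/-!
Write `N = ℤ/p²`, `H = ℤ/q²` and `G = N ⋊ H`. The holomorph `N ⋊ Aut N` acts on `G`: `N` by inner
automorphisms, `Aut N` on the first factor (it commutes with the action because `Aut N` is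
abelian). The action is faithful because the generator of `H` acts on `N` as `x ↦ r x` without
fixed points: `r - 1` is a unit mod `p²`, since `r ≡ 1 mod p` would give `r ^ p ≡ 1 mod p²`. Every
automorphism `θ` of `G` arises: `N` is characteristic, its order being prime to `|H|`; `θ` acts
trivially on `G / N ≅ H` because `φ` is injective (`r` has order `q²`); and the remaining
component `θ(b) b⁻¹ ∈ N` has the form `y / φ(b) y`, since `y ↦ y / φ(b) y` is injective, hence
onto, on the finite group `N`.
-/

open Multiplicative

theorem MonoidHom.apply_eq_one_of_coprime_card {A B : Type*} [Group A] [Group B] [Finite A]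
    [Finite B] (hAB : (Nat.card A).Coprime (Nat.card B)) (f : A →* B) (a : A) : f a = 1 :=
  orderOf_eq_one_iff.mp <| Nat.eq_one_of_dvd_coprimes hAB
    ((orderOf_map_dvd f a).trans (orderOf_dvd_natCard a)) (orderOf_dvd_natCard (f a))

theorem MonoidHom.injective_of_orderOf_map_eq {G M : Type*} [Group G] [Group M] (f : G →* M)
    {g : G} (hg : Subgroup.zpowers g = ⊤) (hfg : orderOf (f g) = orderOf g) :
    Function.Injective f := by
  refine (injective_iff_map_eq_one f).mpr fun x hx => ?_
  obtain ⟨k, rfl⟩ := Subgroup.mem_zpowers_iff.mp (hg ▸ Subgroup.mem_top x)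
  rw [map_zpow, ← orderOf_dvd_iff_zpow_eq_one, hfg] at hx
  exact orderOf_dvd_iff_zpow_eq_one.mp hx

theorem MulAut.commute_of_isCyclic {G : Type*} [Group G] [IsCyclic G] (α β : MulAut G) :
    Commute α β :=
  (IsCyclic.mulAutMulEquiv G).injective <| by rw [map_mul, map_mul, mul_comm]

theorem ZMod.isUnit_sub_one_of_not_orderOf_dvd {p : ℕ} (hp : p.Prime) {x : ZMod (p ^ 2)}
    (hx : ¬orderOf x ∣ p) : IsUnit (x - 1) := by
  have : NeZero (p ^ 2) := ⟨pow_ne_zero 2 hp.ne_zero⟩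
  contrapose! hx
  have hp_dvd : (p : ZMod (p ^ 2)) ∣ x - 1 := by
    rw [← ZMod.natCast_zmod_val (x - 1), ZMod.isUnit_iff_coprime,
      Nat.coprime_pow_right_iff two_pos, Nat.coprime_comm, hp.coprime_iff_not_dvd, not_not] at hx
    rw [← ZMod.natCast_zmod_val (x - 1)]
    exact Nat.cast_dvd_cast hx
  have hp_sq : (p : ZMod (p ^ 2)) ^ 2 = 0 := by exact_mod_cast ZMod.natCast_self (p ^ 2)
  apply orderOf_dvd_of_pow_eq_one
  simpa [hp_sq, sub_eq_zero] using dvd_sub_pow_of_dvd_sub hp_dvd 1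

theorem ZMod.zpowers_ofAdd_one (n : ℕ) : Subgroup.zpowers (ofAdd (1 : ZMod n)) = ⊤ :=
  (Subgroup.eq_top_iff' _).mpr fun x => by
    obtain ⟨k, hk⟩ := ZMod.intCast_surjective (toAdd x)
    exact ⟨k, show ofAdd (1 : ZMod n) ^ k = x by rw [← ofAdd_zsmul, zsmul_one, hk, ofAdd_toAdd]⟩

theorem ZMod.map_eq_ofAdd_mul {n : ℕ} {F : Type*}
    [FunLike F (Multiplicative (ZMod n)) (Multiplicative (ZMod n))] [MonoidHomClass F (Multiplicative (ZMod n)) (Multiplicative (ZMod n))] (f : F)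
    (x : Multiplicative (ZMod n)) : f x = ofAdd (toAdd (f (ofAdd 1)) * toAdd x) := by
  obtain ⟨k, rfl⟩ := Subgroup.mem_zpowers_iff.mp (ZMod.zpowers_ofAdd_one n ▸ Subgroup.mem_top x)
  rw [map_zpow, ← ofAdd_toAdd (f (ofAdd 1)), ← ofAdd_zsmul, ← ofAdd_zsmul, toAdd_ofAdd,
    toAdd_ofAdd, zsmul_eq_mul, zsmul_eq_mul, mul_one, mul_comm]

def MulAut.zmodMultiplier (n : ℕ) : MulAut (Multiplicative (ZMod n)) →* ZMod n where
  toFun α := toAdd (α (ofAdd 1))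
  map_one' := rfl
  map_mul' α β := by
    rw [MulAut.mul_apply, ZMod.map_eq_ofAdd_mul α, toAdd_ofAdd, mul_comm]

theorem MulAut.zmodMultiplier_apply {n : ℕ} (α : MulAut (Multiplicative (ZMod n))) :
    zmodMultiplier n α = toAdd (α (ofAdd 1)) :=
  rfl

theorem MulAut.apply_eq_ofAdd_zmodMultiplier_mul {n : ℕ} (α : MulAut (Multiplicative (ZMod n)))
    (x : Multiplicative (ZMod n)) : α x = ofAdd (zmodMultiplier n α * toAdd x) :=
  ZMod.map_eq_ofAdd_mul α x

theorem MulAut.zmodMultiplier_injective (n : ℕ) : Function.Injective (zmodMultiplier n) :=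
  fun α β h => MulEquiv.ext fun x => by
    rw [apply_eq_ofAdd_zmodMultiplier_mul, apply_eq_ofAdd_zmodMultiplier_mul, h]

theorem MulAut.fixedPointFree_of_isUnit_zmodMultiplier_sub_one {n : ℕ}
    {α : MulAut (Multiplicative (ZMod n))} (h : IsUnit (zmodMultiplier n α - 1)) :
    MonoidHom.FixedPointFree α := fun x hx => by
  rw [apply_eq_ofAdd_zmodMultiplier_mul, ← ofAdd_toAdd x, ofAdd.injective.eq_iff,
    toAdd_ofAdd] at hx
  rw [← toAdd_eq_zero, ← h.mul_right_eq_zero, sub_mul, one_mul, hx, sub_self]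

namespace SemidirectProduct

section

variable {N H : Type*} [Group N] [Group H] {φ : H →* MulAut N}

theorem inl_mul_inr_mul_inl_inv (y : N) (h : H) :
    inl y * inr h * (inl y)⁻¹ = (inl (y / φ h y) * inr h : N ⋊[φ] H) := by
  rw [div_eq_mul_inv, ← map_inv (φ h), map_mul, inl_aut, map_inv inr, map_inv inl]
  group

theorem characteristic_range_inl_of_coprime [Finite N] [Finite H]
    (hNH : (Nat.card N).Coprime (Nat.card H)) : (inl : N →* N ⋊[φ] H).range.Characteristic :=
  Subgroup.characteristic_iff_map_le.mpr fun θ => by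
    rintro _ ⟨_, ⟨x, rfl⟩, rfl⟩
    rw [range_inl_eq_ker_rightHom, MonoidHom.mem_ker]
    exact (rightHom.comp (θ.toMonoidHom.comp inl)).apply_eq_one_of_coprime_card hNH x

variable (φ) in
def extendMulAut (hcomm : ∀ (α : MulAut N) (h : H), Commute α (φ h)) :
    MulAut N →* MulAut (N ⋊[φ] H) where
  toFun α := congr α (MulEquiv.refl H) fun h => (hcomm α h).eq
  map_one' := rfl
  map_mul' _ _ := rfl

@[simp]
theorem extendMulAut_apply_inl (hcomm : ∀ (α : MulAut N) (h : H), Commute α (φ h))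
    (α : MulAut N) (n : N) : extendMulAut φ hcomm α (inl n) = inl (α n) := rfl

@[simp]
theorem extendMulAut_apply_inr (hcomm : ∀ (α : MulAut N) (h : H), Commute α (φ h))
    (α : MulAut N) (h : H) : extendMulAut φ hcomm α (inr h) = inr h :=
  SemidirectProduct.ext (map_one α) rfl

end

variable {N H : Type*} [CommGroup N] [Group H] {φ : H →* MulAut N}

theorem mul_inl_mul_inv (g : N ⋊[φ] H) (n : N) : g * inl n * g⁻¹ = inl (φ g.right n) := by
  conv_lhs => rw [← inl_left_mul_inr_right g]
  rw [mul_inv_rev, show ∀ a b c d : N ⋊[φ] H, a * b * c * (d * a⁻¹) = a * (b * c * d) * a⁻¹ by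
    intros; group, ← map_inv inr, ← inl_aut, ← map_inv inl, ← map_mul, ← map_mul,
    mul_inv_cancel_comm]

theorem inl_left_apply_inl (hN : (inl : N →* N ⋊[φ] H).range.Characteristic)
    (θ : MulAut (N ⋊[φ] H)) (x : N) : inl (θ (inl x)).left = θ (inl x) := by
  obtain ⟨y, hy⟩ : θ (inl x) ∈ (inl : N →* N ⋊[φ] H).range :=
    Subgroup.characteristic_iff_map_le.mp hN θ ⟨inl x, ⟨x, rfl⟩, rfl⟩
  rw [← hy, left_inl]

def restrictMulAut (hN : (inl : N →* N ⋊[φ] H).range.Characteristic)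
    (θ : MulAut (N ⋊[φ] H)) : MulAut N where
  toFun x := (θ (inl x)).left
  invFun x := (θ.symm (inl x)).left
  left_inv x := show (θ.symm (inl (θ (inl x)).left)).left = x by
    rw [inl_left_apply_inl hN θ x, θ.symm_apply_apply, left_inl]
  right_inv x := show (θ (inl (θ.symm (inl x)).left)).left = x by
    rw [inl_left_apply_inl hN θ.symm x, θ.apply_symm_apply, left_inl]
  map_mul' x y := inl_injective <| by
    rw [inl_left_apply_inl hN θ (x * y), map_mul inl x y, map_mul, map_mul inl,
      inl_left_apply_inl hN, inl_left_apply_inl hN]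

theorem inl_restrictMulAut (hN : (inl : N →* N ⋊[φ] H).range.Characteristic)
    (θ : MulAut (N ⋊[φ] H)) (x : N) :
    inl (restrictMulAut hN θ x) = θ (inl x) :=
  inl_left_apply_inl hN θ x

theorem right_apply_inr (hN : (inl : N →* N ⋊[φ] H).range.Characteristic)
    (hcomm : ∀ (α : MulAut N) (h : H), Commute α (φ h))
    (hφ : Function.Injective φ) (θ : MulAut (N ⋊[φ] H)) (h : H) : (θ (inr h)).right = h := by
  set α := restrictMulAut hN θ
  refine hφ (MulEquiv.ext fun n => ?_)
  obtain ⟨x, rfl⟩ := α.surjective n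
  refine inl_injective (φ := φ) ?_
  calc inl (φ (θ (inr h)).right (α x))
      = θ (inr h) * inl (α x) * (θ (inr h))⁻¹ := (mul_inl_mul_inv (θ (inr h)) (α x)).symm
    _ = θ (inl (φ h x)) := by rw [inl_restrictMulAut, inl_aut, map_mul, map_mul, map_inv inr,
        map_inv]
    _ = inl (φ h (α x)) := by rw [← inl_restrictMulAut hN, ← MulAut.mul_apply, (hcomm α h).eq,
        MulAut.mul_apply]

variable (hcomm : ∀ (α : MulAut N) (h : H), Commute α (φ h))

def holomorphToMulAut :
    N ⋊[MonoidHom.id (MulAut N)] MulAut N →* MulAut (N ⋊[φ] H) :=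
  lift (MulAut.conj.comp inl) (extendMulAut φ hcomm) fun α => MonoidHom.ext fun n =>
    MulEquiv.ext fun g => by
      simp only [MonoidHom.comp_apply, MulEquiv.coe_toMonoidHom, MulAut.conj_apply,
        MulAut.mul_apply, map_mul, map_inv, MulAut.apply_inv_self, extendMulAut_apply_inl,
        MonoidHom.id_apply]

theorem holomorphToMulAut_apply_inl (d : N ⋊[MonoidHom.id (MulAut N)] MulAut N) (x : N) :
    holomorphToMulAut hcomm d (inl x) = inl (d.right x) := by
  conv_lhs => rw [← inl_left_mul_inr_right d]
  rw [map_mul, MulAut.mul_apply, holomorphToMulAut, lift_inl, lift_inr, extendMulAut_apply_inl,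
    MonoidHom.comp_apply, MulAut.conj_apply, ← map_inv, ← map_mul, ← map_mul, mul_inv_cancel_comm]

theorem holomorphToMulAut_apply_inr (d : N ⋊[MonoidHom.id (MulAut N)] MulAut N) (h : H) :
    holomorphToMulAut hcomm d (inr h) = inl (d.left / φ h d.left) * inr h := by
  conv_lhs => rw [← inl_left_mul_inr_right d]
  rw [map_mul, MulAut.mul_apply, holomorphToMulAut, lift_inl, lift_inr, extendMulAut_apply_inr]
  simp [inl_mul_inr_mul_inl_inv]

theorem holomorphToMulAut_injective {h₀ : H} (hfree : MonoidHom.FixedPointFree (φ h₀)) :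
    Function.Injective (holomorphToMulAut hcomm) := by
  refine (injective_iff_map_eq_one _).mpr fun d hd => ?_
  have hright : d.right = 1 := MulEquiv.ext fun x => inl_injective <| by
    rw [← holomorphToMulAut_apply_inl hcomm, hd, MulAut.one_apply, MulAut.one_apply]
  have hleft : d.left = 1 := by
    have h := holomorphToMulAut_apply_inr hcomm d h₀
    rw [hd, MulAut.one_apply, eq_comm, mul_eq_right, map_eq_one_iff _ inl_injective,
      div_eq_one] at h
    exact hfree _ h.symm
  exact SemidirectProduct.ext hleft hright

theorem holomorphToMulAut_surjective [Finite N]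
    (hN : (inl : N →* N ⋊[φ] H).range.Characteristic) (hφ : Function.Injective φ) {h₀ : H}
    (hgen : Subgroup.zpowers h₀ = ⊤) (hfree : MonoidHom.FixedPointFree (φ h₀)) :
    Function.Surjective (holomorphToMulAut hcomm) := by
  intro θ
  obtain ⟨y, hy⟩ := hfree.commutatorMap_surjective (θ (inr h₀)).left
  refine ⟨⟨y, restrictMulAut hN θ⟩, MulEquiv.toMonoidHom_injective (hom_ext ?_ ?_)⟩
  · ext1 x
    exact (holomorphToMulAut_apply_inl hcomm _ x).trans (inl_restrictMulAut hN θ x)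
  · refine MonoidHom.eq_of_eqOn_dense (s := {h₀}) ?_ (Set.eqOn_singleton.mpr ?_)
    · rw [← Subgroup.zpowers_eq_closure, hgen]
    · change holomorphToMulAut hcomm _ (inr h₀) = θ (inr h₀)
      rw [holomorphToMulAut_apply_inr, ← MonoidHom.commutatorMap_apply, hy]
      conv_rhs => rw [← inl_left_mul_inr_right (θ (inr h₀)), right_apply_inr hN hcomm hφ]

end SemidirectProduct

open SemidirectProduct in
theorem stmt_14_general (p q : ℕ) (hp : p.Prime) (hq : q.Prime) (hpq : p ≠ q)
    (r : ℕ)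
    (hr : orderOf ((r : ZMod (p ^ 2))) = q ^ 2)
    (φ : Multiplicative (ZMod (q ^ 2)) →* MulAut (Multiplicative (ZMod (p ^ 2))))
    (hφ : φ (Multiplicative.ofAdd 1) (Multiplicative.ofAdd 1) =
      Multiplicative.ofAdd 1 ^ r) :
    Nonempty
      (MulAut (Multiplicative (ZMod (p ^ 2)) ⋊[φ] Multiplicative (ZMod (q ^ 2))) ≃*
        Multiplicative (ZMod (p ^ 2))
          ⋊[MonoidHom.id (MulAut (Multiplicative (ZMod (p ^ 2))))]
          MulAut (Multiplicative (ZMod (p ^ 2)))) := by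
  have : NeZero (p ^ 2) := ⟨pow_ne_zero 2 hp.ne_zero⟩
  have : NeZero (q ^ 2) := ⟨pow_ne_zero 2 hq.ne_zero⟩
  have hmult : MulAut.zmodMultiplier (p ^ 2) (φ (ofAdd 1)) = r := by
    rw [MulAut.zmodMultiplier_apply, hφ, toAdd_pow, toAdd_ofAdd, nsmul_one]
  have hcomm (α : MulAut _) (h) : Commute α (φ h) := MulAut.commute_of_isCyclic α (φ h)
  have hfree : MonoidHom.FixedPointFree (φ (ofAdd 1)) := by
    refine MulAut.fixedPointFree_of_isUnit_zmodMultiplier_sub_one ?_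
    refine hmult ▸ ZMod.isUnit_sub_one_of_not_orderOf_dvd hp fun hdvd => hpq ?_
    exact ((Nat.prime_dvd_prime_iff_eq hq hp).mp
      ((dvd_pow_self q two_ne_zero).trans (hr ▸ hdvd))).symm
  have hφinj : Function.Injective φ := by
    refine φ.injective_of_orderOf_map_eq (ZMod.zpowers_ofAdd_one _) ?_
    rw [← orderOf_injective _ (MulAut.zmodMultiplier_injective _), hmult, hr,
      orderOf_ofAdd_eq_addOrderOf, ZMod.addOrderOf_one]
  have hN : (inl : _ →* Multiplicative (ZMod (p ^ 2)) ⋊[φ] _).range.Characteristic := by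
    refine characteristic_range_inl_of_coprime ?_
    rw [Nat.card_congr toAdd, Nat.card_congr toAdd, Nat.card_zmod, Nat.card_zmod]
    exact Nat.Coprime.pow 2 2 ((Nat.coprime_primes hp hq).mpr hpq)
  exact ⟨(MulEquiv.ofBijective _ ⟨holomorphToMulAut_injective hcomm hfree,
    holomorphToMulAut_surjective hcomm hN hφinj (ZMod.zpowers_ofAdd_one _) hfree⟩).symm⟩

theorem stmt_14 (p q : ℕ) (hp : p.Prime) (hq : q.Prime) (hpq : p ≠ q)
    (hdvd : q ^ 2 ∣ p - 1) (r : ℕ)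
    (hr : orderOf ((r : ZMod (p ^ 2))) = q ^ 2)
    (φ : Multiplicative (ZMod (q ^ 2)) →* MulAut (Multiplicative (ZMod (p ^ 2))))
    (hφ : φ (Multiplicative.ofAdd 1) (Multiplicative.ofAdd 1) =
      Multiplicative.ofAdd 1 ^ r) :
    Nonempty
      (MulAut (Multiplicative (ZMod (p ^ 2)) ⋊[φ] Multiplicative (ZMod (q ^ 2))) ≃*
        Multiplicative (ZMod (p ^ 2))
          ⋊[MonoidHom.id (MulAut (Multiplicative (ZMod (p ^ 2))))]
          MulAut (Multiplicative (ZMod (p ^ 2)))) :=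
  stmt_14_general p q hp hq hpq r hr φ hφ
end

section
/- Let p be an odd prime and G = ⟨a, b, c, d | a^2 = b^2 = c^p = d^p = 1, all pairs commute except b⁻¹cb = c⁻¹⟩, a group of order 4p^2 isomorphic to (Z_p × Z_p) ⋊ (Z_2 × Z_2) where b inverts c and everything else commutes. Then Aut(G) is isomorphic to Z_p ⋊ ((Z_{p-1} × Z_{p-1}) × Z_2). -/
/-!
Write `G = ⟨c, d⟩ ⋊ ⟨a, b⟩` with `⟨c, d⟩ = Z_p × Z_p`, `⟨a, b⟩ = Z_2 × Z_2` and `b` inverting `c`.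
An automorphism `F` sends `c` and `d` to elements of order `p`, which lie in `Z_p × Z_p` because
`p` is odd. Since `b c b⁻¹ = c⁻¹`, and `d` and `a` are central, oddness of `p` then forces
`F c = α c`, `F d = β d`, `F a = a`, `F b = k a^s b` with `α, β ∈ Aut Z_p`, `k ∈ Z_p`, `s ∈ Z_2`.
Conversely each such quadruple gives an automorphism. Composition multiplies `α`, `β` and `s` and
sends `(k, k')` to `k · α k'`, so `Aut G ≅ Z_p ⋊ ((Aut Z_p × Aut Z_p) × Z_2)`, and
`Aut Z_p ≅ Z_{p-1}`.
-/

open Multiplicative SemidirectProduct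

namespace DihedralTimesCyclic

lemma eq_one_of_sq_eq_one_of_pow_eq_one {M : Type*} [Monoid M] {x : M} {n : ℕ} (hn : Odd n)
    (h2 : x ^ 2 = 1) (hxn : x ^ n = 1) : x = 1 := by
  simpa [Nat.coprime_two_left.2 hn] using pow_gcd_eq_one.2 ⟨h2, hxn⟩

lemma prod_hom_ext {M N H : Type*} [Monoid M] [Monoid N] [Monoid H] {f g : M × N →* H}
    (h₁ : f.comp (MonoidHom.inl M N) = g.comp (MonoidHom.inl M N))
    (h₂ : f.comp (MonoidHom.inr M N) = g.comp (MonoidHom.inr M N)) : f = g := by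
  ext x
  rw [← Prod.fst_mul_snd x, map_mul, map_mul]
  exact congr_arg₂ (· * ·) (DFunLike.congr_fun h₁ x.1) (DFunLike.congr_fun h₂ x.2)

section SemidirectProduct

variable {N H : Type*} [CommGroup N] [Group H] {φ : H →* MulAut N}

lemma mul_inl_mul_inv (g : N ⋊[φ] H) (n : N) : g * inl n * g⁻¹ = inl (φ g.right n) := by
  ext <;> simp [mul_comm, mul_left_comm]

lemma commute_inl_iff (g : N ⋊[φ] H) (n : N) : Commute g (inl n) ↔ φ g.right n = n := by
  rw [Commute, SemiconjBy, ← mul_inv_eq_iff_eq_mul, mul_inl_mul_inv, inl_inj]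

end SemidirectProduct

abbrev C (n : ℕ) := Multiplicative (ZMod n)

lemma C2_cases (s : C 2) : s = 1 ∨ s = ofAdd 1 := by revert s; decide

@[simp]
lemma C2_mul_self (s : C 2) : s * s = 1 := by revert s; decide

lemma C2_prod_sq (q : C 2 × C 2) : q ^ 2 = 1 := by
  ext <;> simp [sq]

variable {p : ℕ}

lemma C_pow_self (x : C p) : x ^ p = 1 := by
  ext; simp

lemma C_hom_ext {n : ℕ} {H : Type*} [Group H] {f g : C n →* H}
    (h : f (ofAdd 1) = g (ofAdd 1)) : f = g := by
  refine MonoidHom.ext fun x => ?_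
  have hx : ofAdd (1 : ZMod n) ^ (ZMod.cast (toAdd x) : ℤ) = x := by ext; simp
  rw [← hx, map_zpow, map_zpow, h]

lemma C_mul_self_eq_one_iff (hodd : Odd p) {x : C p} : x * x = 1 ↔ x = 1 :=
  ⟨fun h => eq_one_of_sq_eq_one_of_pow_eq_one hodd (by rwa [sq]) (C_pow_self x),
    fun h => by simp [h]⟩

lemma C_inv_eq_self_iff (hodd : Odd p) {x : C p} : x⁻¹ = x ↔ x = 1 := by
  rw [inv_eq_iff_mul_eq_one, C_mul_self_eq_one_iff hodd]

lemma exists_mulAut_apply_ofAdd_one [Fact p.Prime] {u : C p} (hu : u ≠ 1) :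
    ∃ α : MulAut (C p), α (ofAdd 1) = u := by
  have hu' : toAdd u ≠ 0 := by simpa using hu
  refine ⟨AddEquiv.toMultiplicative (AddAut.mulRight (Units.mk0 _ hu')), ?_⟩
  ext; simp

instance [Fact p.Prime] : IsCyclic (MulAut (C p)) := by
  have : IsCyclic (ZMod (Nat.card (C p)))ˣ := by
    rw [show Nat.card (C p) = p from Nat.card_zmod p]; infer_instance
  exact isCyclic_of_surjective _ (IsCyclic.mulAutMulEquiv (C p)).symm.surjective

noncomputable def mulAutCEquiv [Fact p.Prime] : MulAut (C p) ≃* C (p - 1) :=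
  mulEquivOfCyclicCardEq (by
    rw [IsCyclic.card_mulAut, show Nat.card (C p) = p from Nat.card_zmod p,
      Nat.totient_prime Fact.out]
    exact (Nat.card_zmod _).symm)

def action (p : ℕ) : C 2 × C 2 →* MulAut (C p × C p) where
  toFun q := if q.2 = 1 then 1 else MulEquiv.prodCongr (MulEquiv.inv (C p)) (MulEquiv.refl _)
  map_one' := if_pos rfl
  map_mul' q q' := by
    rcases C2_cases q.2 with h | h <;> rcases C2_cases q'.2 with h' | h' <;>
      ext x <;> simp [h, h', MulEquiv.prodCongr]

@[simp]
lemma action_apply (q : C 2 × C 2) (x : C p × C p) :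
    action p q x = (if q.2 = 1 then x.1 else x.1⁻¹, x.2) := by
  by_cases h : q.2 = 1
  · simp [action, h]
  · simp [action, h]; rfl

lemma eq_action (φ : C 2 × C 2 →* MulAut (C p × C p))
    (hφa : ∀ x, φ (ofAdd 1, 1) x = x) (hφb : ∀ x, φ (1, ofAdd 1) x = (x.1⁻¹, x.2)) :
    φ = action p := by
  ext ⟨s, t⟩ x : 2
  rw [show ((s, t) : C 2 × C 2) = (s, 1) * (1, t) by simp, map_mul, map_mul]
  rcases C2_cases s with rfl | rfl <;> rcases C2_cases t with rfl | rfl <;>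
    simp [hφa, hφb, Prod.mk_one_one]

abbrev G (p : ℕ) := (C p × C p) ⋊[action p] (C 2 × C 2)

def c : G p := inl (ofAdd 1, 1)
def d : G p := inl (1, ofAdd 1)
def a : G p := inr (ofAdd 1, 1)
def b : G p := inr (1, ofAdd 1)

lemma c_pow_self : (c : G p) ^ p = 1 := by
  rw [c, ← map_pow]; simp [C_pow_self, Prod.mk_one_one]

lemma d_pow_self : (d : G p) ^ p = 1 := by
  rw [d, ← map_pow]; simp [C_pow_self, Prod.mk_one_one]

lemma a_sq : (a : G p) ^ 2 = 1 := by
  rw [a, ← map_pow, C2_prod_sq, map_one]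

lemma b_sq : (b : G p) ^ 2 = 1 := by
  rw [b, ← map_pow, C2_prod_sq, map_one]

lemma c_ne_one [Fact (1 < p)] : (c : G p) ≠ 1 := by
  simp [c, SemidirectProduct.ext_iff]

lemma d_ne_one [Fact (1 < p)] : (d : G p) ≠ 1 := by
  simp [d, SemidirectProduct.ext_iff]

lemma a_ne_one : (a : G p) ≠ 1 := by
  simp [a, SemidirectProduct.ext_iff]

lemma b_mul_c_mul_b_inv : (b : G p) * c * b⁻¹ = c⁻¹ := by
  rw [c, mul_inl_mul_inv, ← map_inv]; simp [b]

lemma commute_d (g : G p) : Commute g d := by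
  simp [d, commute_inl_iff]

lemma commute_a (g : G p) : Commute g a := by
  simp [a, Commute, SemiconjBy, SemidirectProduct.ext_iff, mul_comm]

lemma hom_ext_of_generators {H : Type*} [Group H] {f g : G p →* H} (hc : f c = g c)
    (hd : f d = g d) (ha : f a = g a) (hb : f b = g b) : f = g :=
  SemidirectProduct.hom_ext (prod_hom_ext (C_hom_ext hc) (C_hom_ext hd))
    (prod_hom_ext (C_hom_ext ha) (C_hom_ext hb))

/-- In the coordinates `g = (x, y, σ, τ)`, the map `c ↦ α c`, `d ↦ β d`, `a ↦ a`, `b ↦ k a^s b`. -/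
def paramFun (α β : MulAut (C p)) (k : C p) (s : C 2) (g : G p) : G p :=
  ⟨(α g.left.1 * (if g.right.2 = 1 then 1 else k), β g.left.2),
   (g.right.1 * (if g.right.2 = 1 then 1 else s), g.right.2)⟩

lemma paramFun_mul (α β : MulAut (C p)) (k : C p) (s : C 2) (g h : G p) :
    paramFun α β k s (g * h) = paramFun α β k s g * paramFun α β k s h := by
  obtain ⟨⟨x, y⟩, σ, τ⟩ := g
  obtain ⟨⟨x', y'⟩, σ', τ'⟩ := h
  rcases C2_cases τ with rfl | rfl <;> rcases C2_cases τ' with rfl | rfl <;>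
    ext <;> simp [paramFun] <;> grind

lemma paramFun_paramFun (α β α' β' : MulAut (C p)) (k k' : C p) (s s' : C 2) (g : G p) :
    paramFun α β k s (paramFun α' β' k' s' g) =
      paramFun (α * α') (β * β') (k * α k') (s * s') g := by
  obtain ⟨⟨x, y⟩, σ, τ⟩ := g
  rcases C2_cases τ with rfl | rfl <;> ext <;> simp [paramFun] <;> grind

lemma paramFun_one (g : G p) : paramFun 1 1 1 1 g = g := by
  obtain ⟨⟨x, y⟩, σ, τ⟩ := g
  rcases C2_cases τ with rfl | rfl <;> ext <;> simp [paramFun]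

def paramAut (α β : MulAut (C p)) (k : C p) (s : C 2) : MulAut (G p) where
  toFun := paramFun α β k s
  invFun := paramFun α⁻¹ β⁻¹ (α⁻¹ k)⁻¹ s
  left_inv g := by simp [paramFun_paramFun, paramFun_one]
  right_inv g := by simp [paramFun_paramFun, paramFun_one]
  map_mul' := paramFun_mul α β k s

lemma paramAut_mul (α β α' β' : MulAut (C p)) (k k' : C p) (s s' : C 2) :
    paramAut α β k s * paramAut α' β' k' s' =
      paramAut (α * α') (β * β') (k * α k') (s * s') :=
  MulEquiv.ext (paramFun_paramFun α β α' β' k k' s s')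

@[simp]
lemma paramAut_c (α β : MulAut (C p)) (k : C p) (s : C 2) :
    paramAut α β k s c = inl (α (ofAdd 1), 1) := by
  ext <;> simp [paramAut, paramFun, c]

@[simp]
lemma paramAut_d (α β : MulAut (C p)) (k : C p) (s : C 2) :
    paramAut α β k s d = inl (1, β (ofAdd 1)) := by
  ext <;> simp [paramAut, paramFun, d]

@[simp]
lemma paramAut_a (α β : MulAut (C p)) (k : C p) (s : C 2) : paramAut α β k s a = a := by
  ext <;> simp [paramAut, paramFun, a]

@[simp]
lemma paramAut_b (α β : MulAut (C p)) (k : C p) (s : C 2) :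
    paramAut α β k s b = ⟨(k, 1), (s, ofAdd 1)⟩ := by
  ext <;> simp [paramAut, paramFun, b]

abbrev AutModel (p : ℕ) :=
  C p ⋊[(MonoidHom.fst _ _).comp (MonoidHom.fst _ _)] ((MulAut (C p) × MulAut (C p)) × C 2)

def paramAutHom : AutModel p →* MulAut (G p) where
  toFun t := paramAut t.right.1.1 t.right.1.2 t.left t.right.2
  map_one' := MulEquiv.ext paramFun_one
  map_mul' _ _ := (paramAut_mul ..).symm

lemma paramAutHom_injective : Function.Injective (paramAutHom : AutModel p →* MulAut (G p)) := by
  rintro ⟨k, ⟨α, β⟩, s⟩ ⟨k', ⟨α', β'⟩, s'⟩ h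
  have hc : paramAut α β k s c = paramAut α' β' k' s' c := DFunLike.congr_fun h c
  have hd : paramAut α β k s d = paramAut α' β' k' s' d := DFunLike.congr_fun h d
  have hb : paramAut α β k s b = paramAut α' β' k' s' b := DFunLike.congr_fun h b
  simp only [paramAut_c, paramAut_d, inl_inj, Prod.mk.injEq, and_true, true_and] at hc hd
  simp [SemidirectProduct.ext_iff] at hb
  obtain ⟨rfl, rfl⟩ := hb
  obtain rfl := MulEquiv.toMonoidHom_injective (C_hom_ext hc)
  obtain rfl := MulEquiv.toMonoidHom_injective (C_hom_ext hd)
  rfl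

section Classification

variable (hodd : Odd p)
include hodd

lemma action_apply_eq_self_iff {q : C 2 × C 2} {x : C p × C p} :
    action p q x = x ↔ q.2 = 1 ∨ x.1 = 1 := by
  by_cases h : q.2 = 1 <;> simp [h, Prod.ext_iff, C_inv_eq_self_iff hodd]

lemma action_apply_eq_inv_iff {q : C 2 × C 2} {x : C p × C p} :
    action p q x = x⁻¹ ↔ (q.2 = 1 → x.1 = 1) ∧ x.2 = 1 := by
  by_cases h : q.2 = 1 <;>
    simp [h, Prod.ext_iff, eq_comm (a := x.1), eq_comm (a := x.2), C_inv_eq_self_iff hodd]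

lemma eq_inl_of_pow_eq_one {g : G p} (h : g ^ p = 1) : g = inl g.left := by
  have hright : g.right = 1 :=
    eq_one_of_sq_eq_one_of_pow_eq_one hodd (C2_prod_sq _)
      (by rw [← rightHom_eq_right, ← map_pow, h, map_one])
  ext <;> simp [hright]

variable (F : MulAut (G p))

lemma map_c_eq_inl : F c = inl (F c).left :=
  eq_inl_of_pow_eq_one hodd (by rw [← map_pow, c_pow_self, map_one])

lemma action_map_b_map_c : action p (F b).right (F c).left = (F c).left⁻¹ := by
  have h := congr_arg F (b_mul_c_mul_b_inv (p := p))
  rwa [map_mul, map_mul, map_inv, map_inv, map_c_eq_inl hodd F, mul_inl_mul_inv, ← map_inv,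
    inl_inj] at h

lemma map_c : F c = inl ((F c).left.1, 1) :=
  (map_c_eq_inl hodd F).trans
    (congr_arg inl (Prod.ext rfl ((action_apply_eq_inv_iff hodd).1 (action_map_b_map_c hodd F)).2))

variable [Fact (1 < p)]

lemma map_c_ne_one : (F c).left.1 ≠ 1 := by
  intro h
  refine (map_ne_one_iff F F.injective).2 c_ne_one ?_
  rw [map_c hodd F, h, Prod.mk_one_one, map_one]

lemma map_b_right_snd : (F b).right.2 = ofAdd 1 :=
  (C2_cases _).resolve_left fun h =>
    map_c_ne_one hodd F (((action_apply_eq_inv_iff hodd).1 (action_map_b_map_c hodd F)).1 h)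

lemma map_d : F d = inl (1, (F d).left.2) := by
  have hd : F d = inl (F d).left :=
    eq_inl_of_pow_eq_one hodd (by rw [← map_pow, d_pow_self, map_one])
  have hb : Commute (F b) (F d) := (commute_d b).map F
  rw [hd, commute_inl_iff, action_apply_eq_self_iff hodd, map_b_right_snd hodd F] at hb
  exact hd.trans (congr_arg inl (Prod.ext (hb.resolve_left (by decide)) rfl))

lemma map_d_ne_one : (F d).left.2 ≠ 1 := by
  intro h
  refine (map_ne_one_iff F F.injective).2 d_ne_one ?_
  rw [map_d hodd F, h, Prod.mk_one_one, map_one]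

lemma eq_one_or_eq_a {g : G p} (hc : Commute g c) (h2 : g ^ 2 = 1) : g = 1 ∨ g = a := by
  rw [c, commute_inl_iff, action_apply_eq_self_iff hodd] at hc
  have hτ : g.right.2 = 1 := hc.resolve_right (by simp)
  have h2' := congr_arg SemidirectProduct.left h2
  simp only [sq, mul_left, hτ, action_apply, if_true, Prod.ext_iff, Prod.fst_mul, Prod.snd_mul,
    one_left, Prod.fst_one, Prod.snd_one, C_mul_self_eq_one_iff hodd] at h2'
  rcases C2_cases g.right.1 with hσ | hσ
  · left; ext <;> simp [h2', hσ, hτ]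
  · right; ext <;> simp [a, h2', hσ, hτ]

lemma map_a : F a = a := by
  have hc : Commute (F a) c := by simpa using ((commute_a (F.symm c)).map F).symm
  have h2 : F a ^ 2 = 1 := by rw [← map_pow, a_sq, map_one]
  exact (eq_one_or_eq_a hodd hc h2).resolve_left ((map_ne_one_iff F F.injective).2 a_ne_one)

lemma map_b : F b = ⟨((F b).left.1, 1), ((F b).right.1, ofAdd 1)⟩ := by
  have hτ := map_b_right_snd hodd F
  have h2 : (F b ^ 2).left = 1 := by rw [← map_pow, b_sq, map_one, one_left]
  simp only [sq, mul_left, hτ, action_apply, Prod.ext_iff, Prod.fst_mul, Prod.snd_mul,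
    Prod.fst_one, Prod.snd_one, C_mul_self_eq_one_iff hodd] at h2
  ext <;> simp [h2.2, hτ]

end Classification

lemma exists_eq_paramAut [Fact p.Prime] (hodd : Odd p) (F : MulAut (G p)) :
    ∃ α β, F = paramAut α β (F b).left.1 (F b).right.1 := by
  obtain ⟨α, hα⟩ := exists_mulAut_apply_ofAdd_one (map_c_ne_one hodd F)
  obtain ⟨β, hβ⟩ := exists_mulAut_apply_ofAdd_one (map_d_ne_one hodd F)
  refine ⟨α, β, MulEquiv.toMonoidHom_injective (hom_ext_of_generators ?_ ?_ ?_ ?_)⟩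
  · change F c = paramAut α β _ _ c
    rw [paramAut_c, hα]; exact map_c hodd F
  · change F d = paramAut α β _ _ d
    rw [paramAut_d, hβ]; exact map_d hodd F
  · change F a = paramAut α β _ _ a
    rw [paramAut_a]; exact map_a hodd F
  · change F b = paramAut α β _ _ b
    rw [paramAut_b]; exact map_b hodd F

lemma paramAutHom_surjective [Fact p.Prime] (hodd : Odd p) :
    Function.Surjective (paramAutHom : AutModel p →* MulAut (G p)) := fun F => by
  obtain ⟨α, β, hF⟩ := exists_eq_paramAut hodd F
  exact ⟨⟨(F b).left.1, ((α, β), (F b).right.1)⟩, hF.symm⟩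

noncomputable def mulAutEquivAutModel [Fact p.Prime] (hodd : Odd p) : MulAut (G p) ≃* AutModel p :=
  (MulEquiv.ofBijective paramAutHom ⟨paramAutHom_injective, paramAutHom_surjective hodd⟩).symm

end DihedralTimesCyclic

theorem stmt_18 (p : ℕ) (hp : p.Prime) (hodd : p ≠ 2)
    (φ : Multiplicative (ZMod 2) × Multiplicative (ZMod 2) →*
      MulAut (Multiplicative (ZMod p) × Multiplicative (ZMod p)))
    (hφa : ∀ x : Multiplicative (ZMod p) × Multiplicative (ZMod p),
      φ (Multiplicative.ofAdd 1, 1) x = x)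
    (hφb : ∀ x : Multiplicative (ZMod p) × Multiplicative (ZMod p),
      φ (1, Multiplicative.ofAdd 1) x = (x.1⁻¹, x.2)) :
    ∃ ψ : (Multiplicative (ZMod (p - 1)) × Multiplicative (ZMod (p - 1))) ×
        Multiplicative (ZMod 2) →* MulAut (Multiplicative (ZMod p)),
      Nonempty
        (MulAut ((Multiplicative (ZMod p) × Multiplicative (ZMod p))
            ⋊[φ] (Multiplicative (ZMod 2) × Multiplicative (ZMod 2))) ≃*
          Multiplicative (ZMod p) ⋊[ψ]
            ((Multiplicative (ZMod (p - 1)) × Multiplicative (ZMod (p - 1))) ×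
              Multiplicative (ZMod 2))) := by
  have := Fact.mk hp
  obtain rfl := DihedralTimesCyclic.eq_action φ hφa hφb
  let χ := (DihedralTimesCyclic.mulAutCEquiv (p := p))
  exact ⟨_, ⟨(DihedralTimesCyclic.mulAutEquivAutModel (hp.odd_of_ne_two hodd)).trans
    (SemidirectProduct.congr' (MulEquiv.refl _) ((χ.prodCongr χ).prodCongr (MulEquiv.refl _)))⟩⟩
end
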